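/- Let a, b ∈ ℝ³ be nonzero, non-parallel vectors with ‖a+b‖ + ‖a−b‖ = 2, and let G be the joint observable of E^{1,a} and E^{1,b} given by G(i,j) := ‖n_{ij}‖ · (1/2)(I + (n_{ij}/‖n_{ij}‖)·σ), where n_{ij} := (1/2)((−1)^{i+1} a + (−1)^{j+1} b). Then G(1,1) is not the greatest element of lb(A^{1,a}, A^{1,b}): there exists an effect C with C ≤ A^{1,a} and C ≤ A^{1,b} such that C ≤ G(1,1) fails. -/

import Mathlib

open Matrix
open scoped ComplexOrder

noncomputable section

/-- 2×2 complex matrices. -/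
abbrev Mat2 := Matrix (Fin 2) (Fin 2) ℂ

/-- The Pauli matrix σ₁. -/
def sigma1 : Mat2 := !![0, 1; 1, 0]
/-- The Pauli matrix σ₂. -/
def sigma2 : Mat2 := !![0, -Complex.I; Complex.I, 0]
/-- The Pauli matrix σ₃. -/
def sigma3 : Mat2 := !![1, 0; 0, -1]

/-- ℝ³ with the Euclidean norm. -/
abbrev E3 := EuclideanSpace ℝ (Fin 3)

/-- For `v ∈ ℝ³`, `v·σ = v₁σ₁ + v₂σ₂ + v₃σ₃`. -/
def dotSigma (v : E3) : Mat2 := (v 0 : ℂ) • sigma1 + (v 1 : ℂ) • sigma2 + (v 2 : ℂ) • sigma3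

/-- `A^{α,a} = (1/2)(α·I + a·σ)`. -/
def Amat (α : ℝ) (a : E3) : Mat2 := (2 : ℂ)⁻¹ • ((α : ℂ) • (1 : Mat2) + dotSigma a)

/-- An operator is an effect if `0 ≤ A ≤ I` in the Loewner order. -/
def IsEffect (A : Mat2) : Prop := A.PosSemidef ∧ (1 - A).PosSemidef

/-- The Loewner order: `A ≤ B` iff `B - A` is positive semidefinite. -/
def loewnerLE (A B : Mat2) : Prop := (B - A).PosSemidef

/-- The simple (two-outcome) qubit observable `E^{α,a}`,
with `E^{α,a}(1) = A^{α,a}` and `E^{α,a}(0) = I - A^{α,a}`. -/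
def Eobs (α : ℝ) (a : E3) : Fin 2 → Mat2 := fun i => if i = 1 then Amat α a else 1 - Amat α a

/-- `G` is a joint observable of the two-outcome observables `E` and `F`. -/
def IsJointObs (G : Fin 2 → Fin 2 → Mat2) (E F : Fin 2 → Mat2) : Prop :=
  (∀ i j, (G i j).PosSemidef) ∧ (∑ i, ∑ j, G i j) = 1 ∧
    (∀ i, (∑ j, G i j) = E i) ∧ (∀ j, (∑ i, G i j) = F j)

/-- Joint measurability of two two-outcome observables. -/
def JointlyMeasurable2 (E F : Fin 2 → Mat2) : Prop := ∃ G, IsJointObs G E F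

/-- `G` is a joint observable of the three two-outcome observables `E`, `F` and `K`. -/
def IsJointObs3 (G : Fin 2 → Fin 2 → Fin 2 → Mat2) (E F K : Fin 2 → Mat2) : Prop :=
  (∀ i j k, (G i j k).PosSemidef) ∧ (∑ i, ∑ j, ∑ k, G i j k) = 1 ∧
    (∀ i, (∑ j, ∑ k, G i j k) = E i) ∧ (∀ j, (∑ i, ∑ k, G i j k) = F j) ∧
    (∀ k, (∑ i, ∑ j, G i j k) = K k)

/-- Joint measurability of three two-outcome observables. -/
def JointlyMeasurable3 (E F K : Fin 2 → Mat2) : Prop := ∃ G, IsJointObs3 G E F K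

/-- `n_{ij} = (1/2)((-1)^{i+1} a + (-1)^{j+1} b)`. -/
def nvec (a b : E3) (i j : Fin 2) : E3 :=
  (2 : ℝ)⁻¹ • ((-1 : ℝ) ^ ((i : ℕ) + 1) • a + (-1 : ℝ) ^ ((j : ℕ) + 1) • b)

/-- `G(i,j) = ‖n_{ij}‖ (1/2)(I + (n_{ij}/‖n_{ij}‖)·σ)`. -/
def Gab (a b : E3) : Fin 2 → Fin 2 → Mat2 := fun i j =>
  (‖nvec a b i j‖ : ℂ) •
    ((2 : ℂ)⁻¹ • ((1 : Mat2) + dotSigma (‖nvec a b i j‖⁻¹ • nvec a b i j)))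

/-! In Bloch form, `Amat γ v ≥ 0 ↔ ‖v‖ ≤ γ`, so the Loewner order between such matrices is a
statement about norms in ℝ³, and `G(1,1) = Amat ‖n‖ n` with `n = (a + b)/2`. Strict convexity and
the linear independence of `a, b` turn `‖a + b‖ + ‖a - b‖ = 2` into `‖a‖, ‖b‖ < 1`, which leaves
room for `C = Amat c (-w)` with `w = c n/‖n‖` and `c > 0` small: `C` lies below `A^{1,a}` and
`A^{1,b}`, but `‖n + w‖ = ‖n‖ + c > ‖n‖ - c`, so `C ≰ G(1,1)`. -/

lemma Amat_eq_matrix (γ : ℝ) (v : E3) :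
    Amat γ v = !![((γ + v 2 : ℝ) : ℂ) / 2, ((v 0 : ℂ) - v 1 * Complex.I) / 2;
      ((v 0 : ℂ) + v 1 * Complex.I) / 2, ((γ - v 2 : ℝ) : ℂ) / 2] := by
  ext i j
  fin_cases i <;> fin_cases j <;>
    simp [Amat, dotSigma, sigma1, sigma2, sigma3] <;> ring

lemma isHermitian_Amat (γ : ℝ) (v : E3) : (Amat γ v).IsHermitian := by
  rw [Matrix.IsHermitian, Amat_eq_matrix]
  ext i j
  fin_cases i <;> fin_cases j <;> simp [Complex.ext_iff]

lemma Amat_sub (γ δ : ℝ) (v w : E3) : Amat γ v - Amat δ w = Amat (γ - δ) (v - w) := by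
  simp only [Amat_eq_matrix]
  ext i j
  fin_cases i <;> fin_cases j <;> simp <;> ring

lemma Amat_two_zero : Amat 2 0 = 1 := by
  rw [Amat_eq_matrix]
  ext i j
  fin_cases i <;> fin_cases j <;> simp

lemma Amat_zero (γ : ℝ) : Amat γ 0 = (γ / 2) • (1 : Mat2) := by
  rw [Amat_eq_matrix]
  ext i j
  fin_cases i <;> fin_cases j <;> simp

lemma trace_Amat (γ : ℝ) (v : E3) : (Amat γ v).trace = γ := by
  simp [Amat_eq_matrix, Matrix.trace, Fin.sum_univ_two]; ring

lemma trace_Amat_mul_Amat (γ δ : ℝ) (v w : E3) :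
    (Amat γ v * Amat δ w).trace = ((γ * δ + inner ℝ v w) / 2 : ℝ) := by
  simp [Amat_eq_matrix, Matrix.trace, Fin.sum_univ_two, PiLp.inner_apply, Fin.sum_univ_three]
  ring_nf
  simp [Complex.I_sq]
  ring

lemma Amat_norm_mul_self (v : E3) : Amat ‖v‖ v * Amat ‖v‖ v = ‖v‖ • Amat ‖v‖ v := by
  have hv : ‖v‖ ^ 2 = v 0 ^ 2 + v 1 ^ 2 + v 2 ^ 2 := by
    simp [EuclideanSpace.real_norm_sq_eq, Fin.sum_univ_three]
  have hv' : (‖v‖ : ℂ) ^ 2 = (v 0 : ℂ) ^ 2 + (v 1 : ℂ) ^ 2 + (v 2 : ℂ) ^ 2 := by exact_mod_cast hv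
  rw [Amat_eq_matrix]
  ext i j
  fin_cases i <;> fin_cases j <;> simp [Matrix.mul_apply, Fin.sum_univ_two] <;> ring_nf <;>
    simp [Complex.I_sq, hv'] <;> ring

lemma posSemidef_Amat_norm (v : E3) : (Amat ‖v‖ v).PosSemidef := by
  rcases eq_or_ne v 0 with rfl | hv
  · simpa [Amat_zero] using Matrix.PosSemidef.zero
  have hsq : (Amat ‖v‖ v)ᴴ * Amat ‖v‖ v = ‖v‖ • Amat ‖v‖ v := by
    rw [(isHermitian_Amat _ _).eq, Amat_norm_mul_self]
  have := (Matrix.posSemidef_conjTranspose_mul_self (Amat ‖v‖ v)).smul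
    (inv_nonneg.2 (norm_nonneg v))
  rwa [hsq, smul_smul, inv_mul_cancel₀ (norm_ne_zero_iff.2 hv), one_smul] at this

lemma posSemidef_Amat_iff {γ : ℝ} {v : E3} : (Amat γ v).PosSemidef ↔ ‖v‖ ≤ γ := by
  constructor
  · intro hM
    have hγ : 0 ≤ γ := by simpa [trace_Amat] using hM.trace_nonneg
    -- `P² = ‖v‖ P`, so `0 ≤ tr (P M P) = ‖v‖ tr (M P) = ‖v‖² (γ - ‖v‖) / 2`.
    set P := Amat ‖v‖ (-v)
    have hPP : P * P = ‖v‖ • P := by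
      simpa only [P, norm_neg] using Amat_norm_mul_self (-v)
    have key : 0 ≤ (P * Amat γ v * Pᴴ).trace := (hM.mul_mul_conjTranspose_same P).trace_nonneg
    rw [(isHermitian_Amat _ _).eq, Matrix.trace_mul_cycle, hPP, Matrix.smul_mul, Matrix.trace_smul,
      trace_Amat_mul_Amat, inner_neg_left, real_inner_self_eq_norm_sq] at key
    rw [Complex.real_smul, ← Complex.ofReal_mul, Complex.zero_le_real] at key
    by_contra! hlt
    have hv : 0 < ‖v‖ := hγ.trans_lt hlt
    nlinarith [mul_pos (mul_pos hv hv) (sub_pos.2 hlt)]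
  · intro h
    have hsplit : Amat γ v = Amat (γ - ‖v‖) 0 + Amat ‖v‖ v := by
      rw [← sub_eq_iff_eq_add, Amat_sub, sub_self]
    rw [hsplit, Amat_zero]
    exact (Matrix.PosSemidef.one.smul (by linarith)).add (posSemidef_Amat_norm v)

lemma loewnerLE_Amat_iff {γ δ : ℝ} {v w : E3} :
    loewnerLE (Amat γ v) (Amat δ w) ↔ ‖w - v‖ ≤ δ - γ := by
  rw [loewnerLE, Amat_sub, posSemidef_Amat_iff]

lemma isEffect_Amat_iff {γ : ℝ} {v : E3} : IsEffect (Amat γ v) ↔ ‖v‖ ≤ γ ∧ ‖v‖ ≤ 2 - γ := by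
  rw [IsEffect, ← Amat_two_zero, Amat_sub, posSemidef_Amat_iff, posSemidef_Amat_iff, zero_sub,
    norm_neg]

lemma Gab_eq_Amat (a b : E3) (i j : Fin 2) :
    Gab a b i j = Amat ‖nvec a b i j‖ (nvec a b i j) := by
  rw [Gab]
  generalize nvec a b i j = n
  rcases eq_or_ne n 0 with rfl | hn
  · simp [Amat_zero]
  have hn' : (‖n‖ : ℂ) ≠ 0 := by exact_mod_cast norm_ne_zero_iff.2 hn
  rw [Amat_eq_matrix]
  ext k l
  fin_cases k <;> fin_cases l <;> simp [dotSigma, sigma1, sigma2, sigma3] <;> field_simp <;> ring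

lemma nvec_one_one (a b : E3) : nvec a b 1 1 = (2 : ℝ)⁻¹ • (a + b) := by
  simp [nvec]

theorem two_mul_norm_lt_of_linearIndependent {V : Type*} [NormedAddCommGroup V] [NormedSpace ℝ V]
    [StrictConvexSpace ℝ V] {x y : V} (hxy : LinearIndependent ℝ ![x, y]) :
    2 * ‖x‖ < ‖x + y‖ + ‖x - y‖ := by
  have hind : LinearIndependent ℝ ![x + y, x - y] := by
    simpa [sub_eq_add_neg] using
      (LinearIndependent.pair_add_smul_add_smul_iff (R := ℝ) (1 : ℝ) 1 1 (-1)).2 ⟨hxy, by norm_num⟩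
  have hray : ¬ SameRay ℝ (x + y) (x - y) := fun h =>
    sameRay_or_sameRay_neg_iff_not_linearIndependent.1 (Or.inl h) hind
  calc 2 * ‖x‖ = ‖(x + y) + (x - y)‖ := by
        rw [add_add_sub_cancel, ← two_smul ℝ, norm_smul]; norm_num
    _ < ‖x + y‖ + ‖x - y‖ := norm_add_lt_of_not_sameRay hray

theorem not_greatest_general (a b : E3) (hb0 : b ≠ 0)
    (hpar : ¬ ∃ t : ℝ, a = t • b) (h : ‖a + b‖ + ‖a - b‖ = 2) :
    ∃ C : Mat2, IsEffect C ∧ loewnerLE C (Amat 1 a) ∧ loewnerLE C (Amat 1 b) ∧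
      ¬ loewnerLE C (Gab a b 1 1) := by
  have hab : LinearIndependent ℝ ![a, b] :=
    linearIndependent_fin2.2 ⟨hb0, fun t ht => hpar ⟨t, ht.symm⟩⟩
  have ha : ‖a‖ < 1 := by linarith [two_mul_norm_lt_of_linearIndependent hab]
  have hb : ‖b‖ < 1 := by
    have := two_mul_norm_lt_of_linearIndependent (LinearIndependent.pair_symm_iff.1 hab)
    rw [add_comm b a, norm_sub_rev b a] at this
    linarith
  set n := nvec a b 1 1
  have hn : n ≠ 0 := by
    refine (nvec_one_one a b).trans_ne (smul_ne_zero (by norm_num) fun hab0 => ?_)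
    simpa using LinearIndependent.pair_iff.1 hab 1 1 (by simpa using hab0)
  set c := min ((1 - ‖a‖) / 2) ((1 - ‖b‖) / 2)
  have hca : c ≤ (1 - ‖a‖) / 2 := min_le_left _ _
  have hcb : c ≤ (1 - ‖b‖) / 2 := min_le_right _ _
  have hc : 0 < c := lt_min (by linarith) (by linarith)
  set w := (c / ‖n‖) • n
  have hw : ‖w‖ = c := by
    rw [norm_smul, Real.norm_of_nonneg (by positivity), div_mul_cancel₀ _ (norm_ne_zero_iff.2 hn)]
  refine ⟨Amat c (-w), isEffect_Amat_iff.2 ⟨?_, ?_⟩, loewnerLE_Amat_iff.2 ?_,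
    loewnerLE_Amat_iff.2 ?_, ?_⟩
  · rw [norm_neg, hw]
  · rw [norm_neg, hw]
    linarith [norm_nonneg a]
  · rw [sub_neg_eq_add]
    linarith [norm_add_le a w]
  · rw [sub_neg_eq_add]
    linarith [norm_add_le b w]
  · have hnw : SameRay ℝ n w := SameRay.sameRay_nonneg_smul_right n (by positivity)
    rw [Gab_eq_Amat, loewnerLE_Amat_iff, sub_neg_eq_add, hnw.norm_add, hw]
    linarith

/-- on the boundary `‖a+b‖ + ‖a-b‖ = 2` (with `a`, `b` nonzero and
non-parallel), `G(1,1)` is not the greatest element of `lb(A^{1,a}, A^{1,b})`. -/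
theorem not_greatest (a b : E3) (ha0 : a ≠ 0) (hb0 : b ≠ 0)
    (hpar : ¬ ∃ t : ℝ, a = t • b) (h : ‖a + b‖ + ‖a - b‖ = 2) :
    ∃ C : Mat2, IsEffect C ∧ loewnerLE C (Amat 1 a) ∧ loewnerLE C (Amat 1 b) ∧
      ¬ loewnerLE C (Gab a b 1 1) :=
  not_greatest_general a b hb0 hpar h
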